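/- arXiv:1709.08552 — 2 statements merged into one kernel-verified Lean document; each statement's English description precedes it below -/
import Mathlib

section
/- Any projective representation (ℤ/2ℤ)³ → PGL₂(k) over an algebraically closed field of characteristic ≠ 2 has nontrivial kernel. -/
/-- `PGL₂(k) = GL₂(k)/center` (over a field the center of `GL₂` is `k*`). -/
def PGL2 (k : Type*) [Field k] :=
  GL (Fin 2) k ⧸ Subgroup.center (GL (Fin 2) k)

instance (k : Type*) [Field k] : Group (PGL2 k) :=
  inferInstanceAs (Group (GL (Fin 2) k ⧸ Subgroup.center (GL (Fin 2) k)))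

/-!
A nontrivial involution of `PGL₂(k)` lifts, after rescaling by a square root, to an involution
`A ∈ GL₂(k)` that is not scalar, and Cayley–Hamilton (`A² = tr A • A - det A`) forces `tr A = 0`.
If `A, B` are two such lifts with commuting images, then `BA = u • AB` with `u² = 1` by comparing
determinants; `u = 1` is impossible for distinct images, since two commuting traceless `2 × 2`
matrices with the same square agree up to sign. So three distinct commuting nontrivial involutions
lift to pairwise anticommuting `A, B, C`. Then `i • AB` (with `i² = -1`) is a traceless involution
commuting with `C`, hence equal to `±C`: the third involution is the product of the other two.
-/

open Matrix
open scoped MatrixGroups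

namespace Matrix

section CommRing

variable {R : Type*} [CommRing R]

theorem mul_self_eq_trace_smul_sub_det_fin_two (M : Matrix (Fin 2) (Fin 2) R) :
    M * M = M.trace • M - M.det • 1 := by
  ext i j
  fin_cases i <;> fin_cases j <;> simp [mul_apply, trace_fin_two, det_fin_two] <;> ring

end CommRing

variable {k : Type*} [Field k]

theorem trace_mul_eq_zero_of_anticommute {n : Type*} [Fintype n] (h2 : (2 : k) ≠ 0)
    {A B : Matrix n n k} (h : A * B = -(B * A)) : (A * B).trace = 0 := by
  have htr := congrArg trace h
  rw [trace_neg, trace_mul_comm B A] at htr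
  exact (mul_eq_zero.mp (by linear_combination htr : (2 : k) * (A * B).trace = 0)).resolve_left h2

theorem trace_eq_zero_of_mul_self_eq_one {A : Matrix (Fin 2) (Fin 2) k} (hA : A * A = 1)
    (hs : A ∉ Set.range (scalar (Fin 2))) : A.trace = 0 := by
  by_contra ht
  refine hs ⟨A.trace⁻¹ * (1 + A.det), ?_⟩
  have hCH := mul_self_eq_trace_smul_sub_det_fin_two A
  rw [hA, eq_sub_iff_add_eq] at hCH
  rw [scalar_apply, ← smul_one_eq_diagonal, ← smul_smul, add_smul, one_smul, hCH, smul_smul,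
    inv_mul_cancel₀ ht, one_smul]

theorem add_eq_zero_of_det_add_eq_zero (h2 : (2 : k) ≠ 0) {A B : Matrix (Fin 2) (Fin 2) k}
    (hA : A.trace = 0) (hB : B.trace = 0) (hAB : Commute A B) (hsq : A * A = B * B)
    (hdetA : A.det ≠ 0) (hdet : (A + B).det = 0) : A + B = 0 := by
  have h0 : (A + B) * (A + B) = 0 := by
    rw [mul_self_eq_trace_smul_sub_det_fin_two, trace_add, hA, hB, hdet]
    simp
  have h1 : (A + B) * (A + B) = (2 : k) • (A * (A + B)) := by
    simp only [add_mul, mul_add, two_smul, ← hsq, hAB.eq]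
    abel
  have h3 : A * (A + B) = 0 := by
    rw [h1] at h0
    exact (smul_eq_zero.mp h0).resolve_left h2
  calc A + B = A⁻¹ * (A * (A + B)) := by
        rw [← Matrix.mul_assoc, nonsing_inv_mul _ (isUnit_iff_ne_zero.mpr hdetA), Matrix.one_mul]
    _ = 0 := by rw [h3, Matrix.mul_zero]

theorem eq_or_eq_neg_of_commute (h2 : (2 : k) ≠ 0) {A B : Matrix (Fin 2) (Fin 2) k}
    (hA : A.trace = 0) (hB : B.trace = 0) (hAB : Commute A B) (hsq : A * A = B * B)
    (hdetA : A.det ≠ 0) : B = A ∨ B = -A := by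
  have h0 : (A - B) * (A + B) = 0 := by
    rw [sub_mul, mul_add, mul_add, hAB.eq, hsq]
    abel
  have hdet := congrArg det h0
  rw [det_mul, det_zero] at hdet
  rcases mul_eq_zero.mp hdet with h | h
  · rw [sub_eq_add_neg] at h
    have hsum := add_eq_zero_of_det_add_eq_zero h2 hA (by rw [trace_neg, hB, neg_zero])
      hAB.neg_right (by rw [neg_mul_neg, hsq]) hdetA h
    exact Or.inl (eq_of_sub_eq_zero (by rwa [← sub_eq_add_neg] at hsum)).symm
  · exact Or.inr (eq_neg_of_add_eq_zero_right
      (add_eq_zero_of_det_add_eq_zero h2 hA hB hAB hsq hdetA h))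

namespace ProjGenLinGroup

section General

variable {n : Type*} [Fintype n] [DecidableEq n]

theorem mk_eq_mk_of_val_eq_smul {A B : GL n k} {c : k}
    (h : (B : Matrix n n k) = c • (A : Matrix n n k)) : mk A = mk B := by
  rcases eq_or_ne c 0 with rfl | hc
  · rw [zero_smul] at h
    have : Subsingleton (Matrix n n k) :=
      subsingleton_of_zero_eq_one (isUnit_zero_iff.mp (h ▸ B.isUnit))
    rw [Units.ext (Subsingleton.elim (A : Matrix n n k) B)]
  · refine mk_eq_mk_iff.mpr ⟨Units.mk0 c hc, Units.ext ?_⟩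
    rw [h, Units.val_mul, GeneralLinearGroup.coe_scalar, Units.val_mk0, scalar_apply,
      ← smul_one_eq_diagonal, mul_smul_one]

theorem exists_mk_eq_of_mul_self_eq_one [IsAlgClosed k] {x : PGL(n, k)} (hx : x * x = 1) :
    ∃ A : GL n k, mk A = x ∧ (A : Matrix n n k) * A = 1 := by
  obtain ⟨M, rfl⟩ := mk_surjective x
  obtain ⟨u, hu⟩ := mk_eq_mk_iff.mp (show mk (M * M) = mk 1 by rwa [map_mul, mk_one])
  obtain ⟨s, hs⟩ := IsAlgClosed.exists_eq_mul_self (u : k)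
  have hs0 : s ≠ 0 := by
    rintro rfl
    exact u.ne_zero (by rw [hs, mul_zero])
  set S := GeneralLinearGroup.scalar n (Units.mk0 s hs0)
  have hSS : S * S = GeneralLinearGroup.scalar n u := by
    rw [← map_mul]
    congr 1
    ext
    simp [hs]
  have hSM : S * M = M * S := GeneralLinearGroup.scalar_commute _ M
  have hsq : M * S * (M * S) = 1 := by
    rw [← hu, ← hSS, mul_assoc, ← mul_assoc S, hSM, mul_assoc, mul_assoc]
  exact ⟨M * S, by rw [map_mul, mk_scalar, mul_one], by rw [← Units.val_mul, hsq, Units.val_one]⟩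

end General

theorem trace_eq_zero_of_mk_ne_one {A : GL (Fin 2) k} (hA : (A : Matrix (Fin 2) (Fin 2) k) * A = 1)
    (h1 : mk A ≠ 1) : (A : Matrix (Fin 2) (Fin 2) k).trace = 0 :=
  trace_eq_zero_of_mul_self_eq_one hA
    fun hs ↦ h1 (mk_eq_one.mpr (GeneralLinearGroup.mem_center_iff_val_mem_range_scalar.mpr hs))

theorem val_mul_eq_neg_of_commute_mk (h2 : (2 : k) ≠ 0) {A B : GL (Fin 2) k}
    (hA : (A : Matrix (Fin 2) (Fin 2) k) * A = 1) (hB : (B : Matrix (Fin 2) (Fin 2) k) * B = 1)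
    (hA1 : mk A ≠ 1) (hB1 : mk B ≠ 1) (hAB : Commute (mk A) (mk B)) (hne : mk A ≠ mk B) :
    (A * B : Matrix (Fin 2) (Fin 2) k) = -(B * A) := by
  obtain ⟨u, hu⟩ :=
    mk_eq_mk_iff.mp (show mk (A * B) = mk (B * A) by rw [map_mul, map_mul, hAB.eq])
  have hBA : (B * A : Matrix (Fin 2) (Fin 2) k) = (u : k) • (A * B : Matrix (Fin 2) (Fin 2) k) := by
    rw [← Units.val_mul, ← hu, Units.val_mul, GeneralLinearGroup.coe_scalar, scalar_apply,
      ← smul_one_eq_diagonal, mul_smul_one, Units.val_mul]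
  have hu2 : (u : k) * u = 1 := by
    have hdet := congrArg det hBA
    rw [det_smul, Fintype.card_fin, det_mul, det_mul] at hdet
    exact mul_right_cancel₀ (mul_ne_zero A.det_ne_zero B.det_ne_zero) (by linear_combination -hdet)
  rcases mul_self_eq_one_iff.mp hu2 with hu1 | hu1
  · rw [hu1, one_smul] at hBA
    rcases eq_or_eq_neg_of_commute h2 (trace_eq_zero_of_mk_ne_one hA hA1)
        (trace_eq_zero_of_mk_ne_one hB hB1) hBA.symm (hA.trans hB.symm) A.det_ne_zero with h | h
    · exact absurd (mk_eq_mk_of_val_eq_smul (c := 1) (by rw [h, one_smul])) hne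
    · exact absurd (mk_eq_mk_of_val_eq_smul (c := -1) (by rw [h, neg_one_smul])) hne
  · rw [hBA, hu1, neg_one_smul, neg_neg]

theorem eq_mul_of_pairwise_commute_of_mul_self_eq_one [IsAlgClosed k] (h2 : (2 : k) ≠ 0)
    {x y z : PGL(2, k)} (hx : x * x = 1) (hy : y * y = 1) (hz : z * z = 1)
    (hx1 : x ≠ 1) (hy1 : y ≠ 1) (hz1 : z ≠ 1)
    (hxy : Commute x y) (hxz : Commute x z) (hyz : Commute y z)
    (hxy' : x ≠ y) (hxz' : x ≠ z) (hyz' : y ≠ z) : z = x * y := by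
  obtain ⟨A, rfl, hA⟩ := exists_mk_eq_of_mul_self_eq_one hx
  obtain ⟨B, rfl, hB⟩ := exists_mk_eq_of_mul_self_eq_one hy
  obtain ⟨C, rfl, hC⟩ := exists_mk_eq_of_mul_self_eq_one hz
  have hAB := val_mul_eq_neg_of_commute_mk h2 hA hB hx1 hy1 hxy hxy'
  have hAC := val_mul_eq_neg_of_commute_mk h2 hA hC hx1 hz1 hxz hxz'
  have hBC := val_mul_eq_neg_of_commute_mk h2 hB hC hy1 hz1 hyz hyz'
  obtain ⟨i, hi⟩ := IsAlgClosed.exists_eq_mul_self (-1 : k)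
  have hABAB : (A * B : Matrix (Fin 2) (Fin 2) k) * (A * B) = -1 := by
    calc _ = (A : Matrix (Fin 2) (Fin 2) k) * (B * A) * B := by noncomm_ring
      _ = -(A * A * (B * B) : Matrix (Fin 2) (Fin 2) k) := by
        rw [neg_eq_iff_eq_neg.mp hAB.symm]
        noncomm_ring
      _ = -1 := by rw [hA, hB, one_mul]
  have hsq : (C * C : Matrix (Fin 2) (Fin 2) k) = (i • (A * B)) * (i • (A * B)) := by
    rw [hC, smul_mul_smul_comm, ← hi, hABAB, neg_one_smul, neg_neg]
  have hcomm : Commute (C : Matrix (Fin 2) (Fin 2) k) (i • (A * B)) := by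
    refine Commute.smul_right ?_ i
    calc (C * (A * B) : Matrix (Fin 2) (Fin 2) k) = -(A * C) * B := by
          rw [hAC, neg_neg, Matrix.mul_assoc]
      _ = A * (B * C) := by
        rw [hBC]
        noncomm_ring
      _ = A * B * C := (Matrix.mul_assoc _ _ _).symm
  have htr : (i • (A * B : Matrix (Fin 2) (Fin 2) k)).trace = 0 := by
    rw [trace_smul, trace_mul_eq_zero_of_anticommute h2 hAB, smul_zero]
  rw [← map_mul]
  rcases eq_or_eq_neg_of_commute h2 (trace_eq_zero_of_mk_ne_one hC hz1) htr hcomm hsq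
    C.det_ne_zero with h | h
  · exact (mk_eq_mk_of_val_eq_smul (c := i) (by rw [Units.val_mul, h])).symm
  · exact (mk_eq_mk_of_val_eq_smul (c := -i) (by rw [Units.val_mul, neg_smul, h, neg_neg])).symm

end ProjGenLinGroup

end Matrix

/-- Any projective representation `(ℤ/2ℤ)³ → PGL₂(k)` over an algebraically closed
field of characteristic ≠ 2 has nontrivial kernel. -/
theorem stmt_4 (k : Type*) [Field k] [IsAlgClosed k] (hk : (2 : k) ≠ 0)
    (f : Multiplicative (ZMod 2 × ZMod 2 × ZMod 2) →* PGL2 k) :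
    f.ker ≠ ⊥ := by
  intro hker
  have hf : Function.Injective f := (MonoidHom.ker_eq_bot_iff f).mp hker
  have hf1 : ∀ g, g ≠ 1 → f g ≠ 1 := fun g hg ↦ by simpa using hf.ne hg
  have hinv : ∀ g, f g * f g = 1 := fun g ↦ by
    rw [← map_mul, show g * g = 1 by revert g; decide, map_one]
  have hcomm : ∀ g h, Commute (f g) (f h) := fun g h ↦ (Commute.all g h).map f
  let e₁ : Multiplicative (ZMod 2 × ZMod 2 × ZMod 2) := .ofAdd (1, 0, 0)
  let e₂ : Multiplicative (ZMod 2 × ZMod 2 × ZMod 2) := .ofAdd (0, 1, 0)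
  let e₃ : Multiplicative (ZMod 2 × ZMod 2 × ZMod 2) := .ofAdd (0, 0, 1)
  refine hf.ne (show e₃ ≠ e₁ * e₂ by decide) ?_
  rw [map_mul]
  exact ProjGenLinGroup.eq_mul_of_pairwise_commute_of_mul_self_eq_one hk
    (hinv e₁) (hinv e₂) (hinv e₃) (hf1 _ (by decide)) (hf1 _ (by decide)) (hf1 _ (by decide))
    (hcomm _ _) (hcomm _ _) (hcomm _ _) (hf.ne (by decide)) (hf.ne (by decide)) (hf.ne (by decide))
end

section
/- Let k be a field of characteristic ≠ 2 and a, b ∈ k*. The quaternion algebra (a,b)_k is split (isomorphic to the 2×2 matrix algebra) if and only if the conic a u² + b v² = w² in ℙ²_k has a k-rational point. -/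
/-!
An isomorphism with `M₂(k)` produces a nonzero `x` with `x * x = 0`. In `(a,b)_k` this forces `x`
to be a pure quaternion of reduced norm zero, `a x₁² + b x₂² = a b x₃²`, and rescaling gives the
point `(b x₂, a x₁, a b x₃)` of the conic. Conversely, a point of the conic writes `b = p² - a q²`
(with `p = w / v`, `q = u / v`, or, if `v = 0`, using that `a` is then a square, so that the form
`X² - a Y²` is isotropic and hence universal). Then `i ↦ [[0, 1], [a, 0]]`, `j ↦ [[p, q], [-a q, -p]]`
defines a surjective algebra map to `M₂(k)`, bijective since both sides have dimension `4`.
-/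

theorem exists_ne_zero_mul_self_eq_zero_of_ringEquiv_matrix {R A : Type*} [Semiring R]
    [Nontrivial R] [Semiring A] (e : A ≃+* Matrix (Fin 2) (Fin 2) R) :
    ∃ x : A, x ≠ 0 ∧ x * x = 0 := by
  refine ⟨e.symm (Matrix.single 0 1 1), fun h => ?_, ?_⟩
  · have := congrFun₂ (e.symm.injective (h.trans (map_zero e.symm).symm)) 0 1
    simp at this
  · rw [← map_mul, Matrix.single_mul_single_of_ne _ _ _ _ (by decide), map_zero]

namespace QuaternionAlgebra

variable {R : Type*} [CommRing R] {c₁ c₃ : R}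

theorem re_mul_self_of_c₂_eq_zero (x : QuaternionAlgebra R c₁ 0 c₃) :
    (x * x).re = x.re ^ 2 + c₁ * x.imI ^ 2 + c₃ * x.imJ ^ 2 - c₁ * c₃ * x.imK ^ 2 := by
  simp only [re_mul]; ring

theorem im_mul_self_of_c₂_eq_zero (x : QuaternionAlgebra R c₁ 0 c₃) :
    (x * x).im = (2 * x.re) • x.im := by
  ext <;> simp [imI_mul, imJ_mul, imK_mul] <;> ring

theorem re_eq_zero_of_mul_self_eq_zero [IsDomain R] (h2 : (2 : R) ≠ 0)
    {x : QuaternionAlgebra R c₁ 0 c₃} (hx : x * x = 0) : x.re = 0 := by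
  by_contra hre
  have him : x.im = 0 := by
    simpa [h2, hre, im_mul_self_of_c₂_eq_zero] using congrArg im hx
  have : (x * x).re = x.re ^ 2 := by
    have hI : x.imI = 0 := by rw [← imI_im, him]; rfl
    have hJ : x.imJ = 0 := by rw [← imJ_im, him]; rfl
    have hK : x.imK = 0 := by rw [← imK_im, him]; rfl
    rw [re_mul_self_of_c₂_eq_zero, hI, hJ, hK]; ring
  exact hre (pow_eq_zero_iff two_ne_zero |>.mp (this ▸ congrArg re hx))

end QuaternionAlgebra

section

variable {k : Type*} [Field k] {a b p q : k}

theorem exists_conic_point_of_mul_self_eq_zero (hk : (2 : k) ≠ 0) (ha : a ≠ 0) (hb : b ≠ 0)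
    {x : QuaternionAlgebra k a 0 b} (hx0 : x ≠ 0) (hx : x * x = 0) :
    ∃ u v w : k, (u, v, w) ≠ (0, 0, 0) ∧ a * u ^ 2 + b * v ^ 2 = w ^ 2 := by
  have hre := x.re_eq_zero_of_mul_self_eq_zero hk hx
  have hnorm := congrArg QuaternionAlgebra.re hx
  rw [x.re_mul_self_of_c₂_eq_zero, hre, QuaternionAlgebra.re_zero] at hnorm
  refine ⟨b * x.imJ, a * x.imI, a * b * x.imK, fun h => hx0 ?_, ?_⟩
  · simp only [Prod.mk.injEq, mul_eq_zero, ha, hb, false_or] at h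
    ext <;> simp [hre, h]
  · linear_combination a * b * hnorm

theorem exists_sq_sub_mul_sq_eq_of_sq_eq (hk : (2 : k) ≠ 0) {α : k} (hα : α ≠ 0) (ha : α ^ 2 = a)
    (c : k) : ∃ p q : k, p ^ 2 - a * q ^ 2 = c :=
  ⟨(c + 1) / 2, (c - 1) / (2 * α), by rw [← ha]; field_simp; ring⟩

theorem exists_sq_sub_mul_sq_eq_of_conic (hk : (2 : k) ≠ 0) (ha : a ≠ 0) {u v w : k}
    (hne : (u, v, w) ≠ (0, 0, 0)) (h : a * u ^ 2 + b * v ^ 2 = w ^ 2) :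
    ∃ p q : k, p ^ 2 - a * q ^ 2 = b := by
  by_cases hv : v = 0
  · subst hv
    have hu : u ≠ 0 := by
      rintro rfl
      have hw : w = 0 := pow_eq_zero_iff two_ne_zero |>.mp (by simpa using h.symm)
      exact hne (by simp [hw])
    refine exists_sq_sub_mul_sq_eq_of_sq_eq hk (α := w / u) ?_ ?_ b
    · have hw : w ≠ 0 := by
        rintro rfl
        exact mul_ne_zero ha (pow_ne_zero 2 hu) (by simpa using h)
      exact div_ne_zero hw hu
    · field_simp; linear_combination -h
  · exact ⟨w / v, u / v, by field_simp; linear_combination -h⟩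

def splittingBasis (h : p ^ 2 - a * q ^ 2 = b) :
    QuaternionAlgebra.Basis (Matrix (Fin 2) (Fin 2) k) a 0 b where
  i := !![0, 1; a, 0]
  j := !![p, q; -(a * q), -p]
  k := !![-(a * q), -p; a * p, a * q]
  i_mul_i := by ext i j; fin_cases i <;> fin_cases j <;> simp
  j_mul_j := by subst h; ext i j; fin_cases i <;> fin_cases j <;> simp <;> ring
  i_mul_j := by ext i j; fin_cases i <;> fin_cases j <;> simp
  j_mul_i := by ext i j; fin_cases i <;> fin_cases j <;> simp <;> ring

theorem splittingBasis_liftHom_apply (h : p ^ 2 - a * q ^ 2 = b)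
    (x : QuaternionAlgebra k a 0 b) :
    (splittingBasis h).liftHom x =
      !![x.re + p * x.imJ - a * q * x.imK, x.imI + q * x.imJ - p * x.imK;
         a * x.imI - a * q * x.imJ + a * p * x.imK, x.re - p * x.imJ + a * q * x.imK] := by
  ext i j
  fin_cases i <;> fin_cases j <;>
    simp [splittingBasis, QuaternionAlgebra.Basis.lift, Matrix.algebraMap_matrix_apply] <;> ring

theorem surjective_splittingBasis_liftHom (hk : (2 : k) ≠ 0) (ha : a ≠ 0) (hb : b ≠ 0)
    (h : p ^ 2 - a * q ^ 2 = b) : Function.Surjective (splittingBasis h).liftHom := by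
  intro m
  refine ⟨⟨(m 0 0 + m 1 1) / 2, (a * m 0 1 + m 1 0) / (2 * a),
    (p * (m 0 0 - m 1 1) - q * (a * m 0 1 - m 1 0)) / (2 * b),
    (a * q * (m 0 0 - m 1 1) - p * (a * m 0 1 - m 1 0)) / (2 * a * b)⟩, ?_⟩
  rw [splittingBasis_liftHom_apply]
  ext i j; fin_cases i <;> fin_cases j <;> simp <;> field_simp <;> subst h <;> ring

theorem nonempty_algEquiv_matrix_of_sq_sub_mul_sq_eq (hk : (2 : k) ≠ 0) (ha : a ≠ 0) (hb : b ≠ 0)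
    (h : p ^ 2 - a * q ^ 2 = b) :
    Nonempty (QuaternionAlgebra k a 0 b ≃ₐ[k] Matrix (Fin 2) (Fin 2) k) := by
  have hsurj := surjective_splittingBasis_liftHom hk ha hb h
  have hrank : Module.finrank k (QuaternionAlgebra k a 0 b) =
      Module.finrank k (Matrix (Fin 2) (Fin 2) k) := by
    simp [QuaternionAlgebra.finrank_eq_four, Module.finrank_matrix]
  have hinj := (LinearMap.injective_iff_surjective_of_finrank_eq_finrank hrank
    (f := (splittingBasis h).liftHom.toLinearMap)).mpr hsurj
  exact ⟨AlgEquiv.ofBijective _ ⟨hinj, hsurj⟩⟩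

end

/-- For a field `k` of characteristic ≠ 2 and `a, b ∈ k*`, the quaternion algebra
`(a,b)_k` is split (isomorphic to `M₂(k)`) iff the conic `a u² + b v² = w²` has a
`k`-rational point. -/
theorem stmt_10 (k : Type*) [Field k] (hk : (2 : k) ≠ 0) (a b : k) (ha : a ≠ 0) (hb : b ≠ 0) :
    Nonempty (QuaternionAlgebra k a 0 b ≃ₐ[k] Matrix (Fin 2) (Fin 2) k) ↔
      ∃ u v w : k, (u, v, w) ≠ (0, 0, 0) ∧ a * u ^ 2 + b * v ^ 2 = w ^ 2 := by
  constructor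
  · rintro ⟨e⟩
    obtain ⟨x, hx0, hx⟩ := exists_ne_zero_mul_self_eq_zero_of_ringEquiv_matrix e.toRingEquiv
    exact exists_conic_point_of_mul_self_eq_zero hk ha hb hx0 hx
  · rintro ⟨u, v, w, hne, h⟩
    obtain ⟨p, q, hpq⟩ := exists_sq_sub_mul_sq_eq_of_conic hk ha hne h
    exact nonempty_algEquiv_matrix_of_sq_sub_mul_sq_eq hk ha hb hpq
end
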